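/- In the discrete Heisenberg group H₃ with word metric d from S = {a,b,a⁻¹,b⁻¹}, for every group element g = c^z b^y a^x one has d(e, g) ≥ |x| + |y|, with equality when zyx ≥ 0, max(x²,y²) ≥ |z| and |xy| ≥ |z|. -/

import Mathlib

/-!
The lower bound: the abelianisation `g ↦ (g.x, g.y)` is a homomorphism to `ℤ²` sending every
generator to a vector of `ℓ¹`-norm one, so a word of length `n` lands in the `ℓ¹`-ball of
radius `n`.

For the equality case take `x, y, z ≥ 0` (the general case follows by scaling the exponents with
the signs of `x` and `y`). Since the `z`-coordinate of a word in `a, b` counts the pairs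
(`a` before `b`), the word `b^m a^r b^q a^v b^w` of length `x + y` reaches `c^z b^y a^x` as soon as
`r + v = x`, `m + q + w = y` and `r q + x w = z`; for `z ≤ x y` Euclidean division of `z` by `x`
provides such exponents.
-/

/-- The discrete Heisenberg group `H₃`: `⟨x, y, z⟩` encodes the 3×3 upper unitriangular
integer matrix `(1 x z; 0 1 y; 0 0 1)`, with matrix multiplication. -/
@[ext] structure Heis where
  x : ℤ
  y : ℤ
  z : ℤ

namespace Heis

instance : Mul Heis := ⟨fun p q => ⟨p.x + q.x, p.y + q.y, p.z + q.z + p.x * q.y⟩⟩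
instance : One Heis := ⟨⟨0, 0, 0⟩⟩
instance : Inv Heis := ⟨fun p => ⟨-p.x, -p.y, p.x * p.y - p.z⟩⟩

theorem mul_def (p q : Heis) :
    p * q = ⟨p.x + q.x, p.y + q.y, p.z + q.z + p.x * q.y⟩ := rfl
theorem one_def : (1 : Heis) = ⟨0, 0, 0⟩ := rfl
theorem inv_def (p : Heis) : p⁻¹ = ⟨-p.x, -p.y, p.x * p.y - p.z⟩ := rfl

instance : Group Heis where
  mul_assoc p q r := by
    simp only [mul_def, mk.injEq]
    refine ⟨by ring, by ring, by ring⟩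
  one_mul p := by
    obtain ⟨px, py, pz⟩ := p
    simp only [one_def, mul_def, mk.injEq]
    refine ⟨by ring, by ring, by ring⟩
  mul_one p := by
    obtain ⟨px, py, pz⟩ := p
    simp only [one_def, mul_def, mk.injEq]
    refine ⟨by ring, by ring, by ring⟩
  inv_mul_cancel p := by
    obtain ⟨px, py, pz⟩ := p
    simp only [inv_def, mul_def, one_def, mk.injEq]
    refine ⟨by ring, by ring, by ring⟩

/-- The generator `a` (the elementary matrix with a `1` in position (1,2)). -/
def a : Heis := ⟨1, 0, 0⟩
/-- The generator `b` (the elementary matrix with a `1` in position (2,3)). -/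
def b : Heis := ⟨0, 1, 0⟩
/-- The commutator `c = [a,b] = a⁻¹b⁻¹ab` (the elementary matrix with a `1` in (1,3)). -/
def c : Heis := ⟨0, 0, 1⟩

/-- The standard generating set `S = {a, b, a⁻¹, b⁻¹}`. -/
def S : Set Heis := {a, b, a⁻¹, b⁻¹}

/-- The word metric for the generating set `S`: the length of the shortest word with
letters in `S` leading from `g` to `h` in the Cayley graph. -/
noncomputable def wdist (g h : Heis) : ℕ :=
  sInf {n | ∃ l : List Heis, (∀ s ∈ l, s ∈ S) ∧ l.length = n ∧ g * l.prod = h}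

end Heis

section Words

variable {G : Type*}

def HasWordOfLength [Monoid G] (T : Set G) (g : G) (n : ℕ) : Prop :=
  ∃ l : List G, (∀ s ∈ l, s ∈ T) ∧ l.length = n ∧ l.prod = g

namespace HasWordOfLength

section Monoid

variable [Monoid G] {T : Set G} {g h : G} {m n : ℕ}

theorem of_mem (hg : g ∈ T) : HasWordOfLength T g 1 :=
  ⟨[g], by simpa using hg, rfl, List.prod_singleton⟩

theorem mul (hg : HasWordOfLength T g m) (hh : HasWordOfLength T h n) :
    HasWordOfLength T (g * h) (m + n) := by
  obtain ⟨l, hl, rfl, rfl⟩ := hg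
  obtain ⟨l', hl', rfl, rfl⟩ := hh
  refine ⟨l ++ l', fun s hs => ?_, List.length_append, List.prod_append⟩
  rcases List.mem_append.mp hs with hs | hs
  exacts [hl s hs, hl' s hs]

theorem pow (hg : HasWordOfLength T g n) (k : ℕ) : HasWordOfLength T (g ^ k) (n * k) := by
  induction k with
  | zero => exact ⟨[], by simp, rfl, by simp⟩
  | succ k ih => simpa only [pow_succ, Nat.mul_succ] using ih.mul hg

end Monoid

section Group

variable [Group G] {T : Set G} {g : G} {n : ℕ}

theorem inv (hT : ∀ s ∈ T, s⁻¹ ∈ T) (hg : HasWordOfLength T g n) :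
    HasWordOfLength T g⁻¹ n := by
  obtain ⟨l, hl, rfl, rfl⟩ := hg
  refine ⟨(l.map (·⁻¹)).reverse, fun s hs => ?_, by simp, (List.prod_inv_reverse l).symm⟩
  obtain ⟨t, ht, rfl⟩ := List.mem_map.mp (List.mem_reverse.mp hs)
  exact hT t (hl t ht)

theorem zpow (hT : ∀ s ∈ T, s⁻¹ ∈ T) (hg : HasWordOfLength T g n) (k : ℤ) :
    HasWordOfLength T (g ^ k) (n * k.natAbs) := by
  rcases Int.eq_nat_or_neg k with ⟨k, rfl | rfl⟩
  · simpa using hg.pow k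
  · simpa using (hg.pow k).inv hT

end Group

end HasWordOfLength

end Words

theorem Int.sign_mul_abs_of_abs_le_of_mul_nonneg {u z : ℤ} (hzu : |z| ≤ |u|)
    (hsign : 0 ≤ z * u) : u.sign * |z| = z := by
  rcases lt_trichotomy z 0 with hz | rfl | hz
  · have hu : u < 0 := by
      rcases lt_trichotomy u 0 with hu | rfl | hu
      exacts [hu, by simp at hzu; omega, by nlinarith]
    simp [Int.sign_eq_neg_one_of_neg hu, abs_of_neg hz]
  · simp
  · have hu : 0 < u := by
      rcases lt_trichotomy u 0 with hu | rfl | hu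
      exacts [by nlinarith, by simp at hzu; omega, hu]
    simp [Int.sign_eq_one_of_pos hu, abs_of_pos hz]

theorem Int.exists_mul_add_mul_eq_of_le_mul {x y z : ℤ} (hx : 0 ≤ x) (hy : 0 ≤ y) (hz : 0 ≤ z)
    (hzxy : z ≤ x * y) : ∃ m r q v w : ℤ, 0 ≤ m ∧ 0 ≤ r ∧ 0 ≤ q ∧ 0 ≤ v ∧ 0 ≤ w ∧
      r + v = x ∧ m + q + w = y ∧ r * q + x * w = z := by
  rcases hzxy.eq_or_lt with rfl | hlt
  · exact ⟨0, x, y, 0, 0, le_rfl, hx, hy, le_rfl, le_rfl, by ring, by ring, by ring⟩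
  have hx0 : 0 < x := hx.lt_of_ne (by rintro rfl; simp at hlt; omega)
  have hdiv : z / x < y := Int.ediv_lt_of_lt_mul hx0 (by rwa [mul_comm])
  exact ⟨y - z / x - 1, z % x, 1, x - z % x, z / x, by omega, Int.emod_nonneg _ hx0.ne',
    zero_le_one, by linarith [Int.emod_lt_of_pos z hx0], Int.ediv_nonneg hz hx0.le,
    by ring, by ring, by linarith [Int.emod_add_mul_ediv z x]⟩

namespace Heis

theorem mk_zpow {u v w : ℤ} (huv : u * v = 0) (n : ℤ) :
    (⟨u, v, w⟩ : Heis) ^ n = ⟨n * u, n * v, n * w⟩ := by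
  induction n using Int.induction_on with
  | zero => simp [one_def]
  | succ n ih =>
    rw [zpow_add_one, ih, mul_def, mk.injEq]
    exact ⟨by ring, by ring, by linear_combination n * huv⟩
  | pred n ih =>
    rw [zpow_sub_one, ih, inv_def, mul_def, mk.injEq]
    exact ⟨by ring, by ring, by linear_combination (1 + n) * huv⟩

theorem a_zpow (n : ℤ) : a ^ n = ⟨n, 0, 0⟩ := by simp [a, mk_zpow]
theorem b_zpow (n : ℤ) : b ^ n = ⟨0, n, 0⟩ := by simp [b, mk_zpow]
theorem c_zpow (n : ℤ) : c ^ n = ⟨0, 0, n⟩ := by simp [c, mk_zpow]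

theorem c_zpow_mul_b_zpow_mul_a_zpow (x y z : ℤ) : c ^ z * b ^ y * a ^ x = ⟨x, y, z⟩ := by
  simp [a_zpow, b_zpow, c_zpow, mul_def]

theorem c_eq_commutator : c = a⁻¹ * b⁻¹ * a * b := by
  simp [a, b, c, inv_def, mul_def]

theorem a_mem_S : a ∈ S := by simp [S]
theorem b_mem_S : b ∈ S := by simp [S]

theorem inv_mem_S {s : Heis} (hs : s ∈ S) : s⁻¹ ∈ S := by
  rcases hs with rfl | rfl | rfl | rfl <;> simp [S]

theorem hasWordOfLength_zpow_of_mem_S {s : Heis} (hs : s ∈ S) (n : ℤ) :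
    HasWordOfLength S (s ^ n) n.natAbs := by
  simpa using (HasWordOfLength.of_mem hs).zpow (fun _ => inv_mem_S) n

theorem exists_hasWordOfLength (g : Heis) : ∃ n, HasWordOfLength S g n := by
  obtain ⟨x, y, z⟩ := g
  have hS : ∀ s ∈ S, s⁻¹ ∈ S := fun _ => inv_mem_S
  have hc : HasWordOfLength S c 4 := by
    rw [c_eq_commutator]
    exact (((HasWordOfLength.of_mem (hS a a_mem_S)).mul (.of_mem (hS b b_mem_S))).mul
      (.of_mem a_mem_S)).mul (.of_mem b_mem_S)
  rw [← c_zpow_mul_b_zpow_mul_a_zpow]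
  exact ⟨_, ((hc.zpow hS z).mul (hasWordOfLength_zpow_of_mem_S b_mem_S y)).mul
    (hasWordOfLength_zpow_of_mem_S a_mem_S x)⟩

theorem abs_x_add_abs_y_le_of_hasWordOfLength {g : Heis} {n : ℕ}
    (hg : HasWordOfLength S g n) : |g.x| + |g.y| ≤ n := by
  obtain ⟨l, hl, rfl, rfl⟩ := hg
  induction l with
  | nil => simp [one_def]
  | cons s l ih =>
    have hs : |s.x| + |s.y| = 1 := by
      rcases hl s List.mem_cons_self with rfl | rfl | rfl | rfl <;> simp [a, b, inv_def]
    have hl' := ih fun t ht => hl t (List.mem_cons_of_mem s ht)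
    simp only [List.prod_cons, mul_def, List.length_cons, Nat.cast_succ]
    linarith [abs_add_le s.x l.prod.x, abs_add_le s.y l.prod.y]

theorem wdist_one_eq_sInf (g : Heis) : wdist 1 g = sInf {n | HasWordOfLength S g n} := by
  simp only [wdist, one_mul, HasWordOfLength]

theorem wdist_one_le {g : Heis} {n : ℕ} (hg : HasWordOfLength S g n) : wdist 1 g ≤ n := by
  rw [wdist_one_eq_sInf]
  exact Nat.sInf_le hg

theorem abs_x_add_abs_y_le_wdist_one (g : Heis) : |g.x| + |g.y| ≤ (wdist 1 g : ℤ) := by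
  rw [wdist_one_eq_sInf]
  exact abs_x_add_abs_y_le_of_hasWordOfLength (Nat.sInf_mem (exists_hasWordOfLength g))

theorem b_a_b_a_b_zpow (m r q v w : ℤ) :
    b ^ m * a ^ r * b ^ q * a ^ v * b ^ w = ⟨r + v, m + q + w, r * q + (r + v) * w⟩ := by
  simp only [a_zpow, b_zpow, mul_def, mk.injEq]
  exact ⟨by ring, by ring, by ring⟩

theorem exists_b_a_b_a_b_zpow_eq {x y z : ℤ} (hzxy : |z| ≤ |x * y|) (hsign : 0 ≤ z * y * x) :
    ∃ m r q v w : ℤ, b ^ m * a ^ r * b ^ q * a ^ v * b ^ w = ⟨x, y, z⟩ ∧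
      |m| + |r| + |q| + |v| + |w| = |x| + |y| := by
  obtain ⟨M, R, Q, V, W, hM, hR, hQ, hV, hW, hx, hy, hz⟩ :=
    Int.exists_mul_add_mul_eq_of_le_mul (abs_nonneg x) (abs_nonneg y) (abs_nonneg z)
      (by rwa [← abs_mul])
  have hσ : x.sign * |x| = x := Int.sign_mul_abs x
  have hτ : y.sign * |y| = y := Int.sign_mul_abs y
  have hστ : x.sign * y.sign * |z| = z := by
    rw [← Int.sign_mul]
    exact Int.sign_mul_abs_of_abs_le_of_mul_nonneg hzxy 
      (by linarith [mul_assoc z y x, mul_comm x y])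
  have habsσ : |x.sign| * |x| = |x| := by rw [← abs_abs x, ← abs_mul, abs_abs, hσ]
  have habsτ : |y.sign| * |y| = |y| := by rw [← abs_abs y, ← abs_mul, abs_abs, hτ]
  refine ⟨y.sign * M, x.sign * R, y.sign * Q, x.sign * V, y.sign * W, ?_, ?_⟩
  · rw [b_a_b_a_b_zpow, mk.injEq]
    refine ⟨?_, ?_, ?_⟩
    · linear_combination x.sign * hx + hσ
    · linear_combination y.sign * hy + hτ
    · linear_combination x.sign * y.sign * hz + hστ + x.sign * y.sign * W * hx
  · simp only [abs_mul, abs_of_nonneg, hM, hR, hQ, hV, hW]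
    linear_combination |x.sign| * hx + |y.sign| * hy + habsσ + habsτ

theorem wdist_one_mk_le {x y z : ℤ} (hzxy : |z| ≤ |x * y|) (hsign : 0 ≤ z * y * x) :
    (wdist 1 ⟨x, y, z⟩ : ℤ) ≤ |x| + |y| := by
  obtain ⟨m, r, q, v, w, hprod, hlen⟩ := exists_b_a_b_a_b_zpow_eq hzxy hsign
  have ha := hasWordOfLength_zpow_of_mem_S a_mem_S
  have hb := hasWordOfLength_zpow_of_mem_S b_mem_S
  have hword := ((((hb m).mul (ha r)).mul (hb q)).mul (ha v)).mul (hb w)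
  rw [hprod] at hword
  rw [← hlen]
  simpa only [Nat.cast_add, Int.natCast_natAbs] using
    (Nat.cast_le (α := ℤ)).mpr (wdist_one_le hword)

end Heis

open Heis in
/-- For every `g = c^z b^y a^x` one has `d(e, g) ≥ |x| + |y|`, with equality when
`zyx ≥ 0`, `max(x², y²) ≥ |z|` and `|xy| ≥ |z|` (Blachère's formula, case I.2.1). -/
theorem stmt15 (x y z : ℤ) :
    |x| + |y| ≤ (wdist 1 (c ^ z * b ^ y * a ^ x) : ℤ) ∧
    (0 ≤ z * y * x → |z| ≤ max (x ^ 2) (y ^ 2) → |z| ≤ |x * y| →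
      (wdist 1 (c ^ z * b ^ y * a ^ x) : ℤ) = |x| + |y|) := by
  rw [c_zpow_mul_b_zpow_mul_a_zpow]
  exact ⟨abs_x_add_abs_y_le_wdist_one _, fun hsign _ hzxy =>
    (wdist_one_mk_le hzxy hsign).antisymm (abs_x_add_abs_y_le_wdist_one _)⟩
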